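/- For all α ∈ [0,1], every complex root of the polynomial λ³ + (b+2σ)λ² + (2σb+σ²)λ + σ²b, where σ = 25α+10 and b = (α+8)/3, has strictly negative real part. -/
import Mathlib


theorem stmt_2 (α σ b : ℝ) (hα : α ∈ Set.Icc (0:ℝ) 1)
    (hσ : σ = 25*α + 10) (hb : b = (α + 8)/3) :
    ∀ z : ℂ, z^3 + ((b + 2*σ : ℝ) : ℂ)*z^2 + ((2*σ*b + σ^2 : ℝ) : ℂ)*z
      + ((σ^2*b : ℝ) : ℂ) = 0 → z.re < 0 := by
  obtain ⟨h0, h1⟩ := hα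
  have hσpos : (0:ℝ) < σ := by rw [hσ]; linarith
  have hbpos : (0:ℝ) < b := by rw [hb]; linarith
  intro z hz
  have hfac : (z + (b:ℂ)) * (z + (σ:ℂ))^2 = 0 := by
    rw [← hz]; push_cast; ring
  rcases mul_eq_zero.mp hfac with h | h
  · have : z = -(b:ℂ) := by linear_combination h
    rw [this]; simp; linarith
  · have h' : z + (σ:ℂ) = 0 := by
      exact pow_eq_zero_iff (by norm_num) |>.mp h
    have : z = -(σ:ℂ) := by linear_combination h'
    rw [this]; simp; linarith
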